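/- Let L be a positive integer, let a, M be positive integers dividing L, and let h ∈ ℂ^L be such that G(h,a,M) is a Parseval frame, i.e. its frame operator equals the identity: Σ_{n=0}^{L/a−1} Σ_{m=0}^{M−1} ⟨f, M_{m/M}T_{na} h⟩ · (M_{m/M}T_{na} h) = f for all f ∈ ℂ^L. Then ‖h‖₂² = a/M. -/

import Mathlib

/-!
Testing the reconstruction identity `∑ᵢ ⟨f, φᵢ⟩ φᵢ = f` at the point masses `δⱼ` shows that
`∑ᵢ |φᵢ(j)|² = 1` for every `j`, so the atoms of a Parseval frame of `ℂ^L` have total squared norm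
`L` (the trace of the identity). Every Gabor atom has the squared norm of `h`, since translation
and modulation are unitary, and there are `(L/a)·M` of them: hence `(L/a)·M·‖h‖² = L`.
-/

/-- The Gabor atom `M_{m/M} T_n g` on `ℂ^L` (identified with `ZMod L → ℂ`):
circular translation by `n` followed by modulation `e^{2πiml/M}`. -/
noncomputable def gaborAtom (L M : ℕ) [NeZero L] (g : ZMod L → ℂ) (m n : ℕ) :
    ZMod L → ℂ :=
  fun l => g (l - (n : ZMod L)) *
    Complex.exp (2 * Real.pi * Complex.I * (m : ℂ) * (l.val : ℂ) / (M : ℂ))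

/-- The inner product `⟨f, g⟩ = ∑_{l=0}^{L-1} f[l]·conj(g[l])` on `ℂ^L`. -/
noncomputable def ipL (L : ℕ) [NeZero L] (f g : ZMod L → ℂ) : ℂ :=
  ∑ l : ZMod L, f l * star (g l)

section
variable {L : ℕ} [NeZero L]

theorem ipL_single_one_left (j : ZMod L) (g : ZMod L → ℂ) :
    ipL L (Pi.single j 1) g = star (g j) := by
  simp [ipL, Pi.single_apply]

theorem norm_gaborAtom_apply (M : ℕ) (g : ZMod L → ℂ) (m n : ℕ) (l : ZMod L) :
    ‖gaborAtom L M g m n l‖ = ‖g (l - n)‖ := by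
  have harg : 2 * Real.pi * Complex.I * (m : ℂ) * (l.val : ℂ) / (M : ℂ)
      = ((2 * Real.pi * m * l.val / M : ℝ) : ℂ) * Complex.I := by
    push_cast; ring
  rw [gaborAtom, norm_mul, harg, Complex.norm_exp_ofReal_mul_I, mul_one]

theorem sum_norm_sq_gaborAtom (M : ℕ) (g : ZMod L → ℂ) (m n : ℕ) :
    ∑ l, ‖gaborAtom L M g m n l‖ ^ 2 = ∑ l, ‖g l‖ ^ 2 := by
  simp_rw [norm_gaborAtom_apply]
  exact Equiv.sum_comp (Equiv.subRight (n : ZMod L)) fun l => ‖g l‖ ^ 2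

theorem sum_norm_sq_apply_eq_one_of_reconstruction {ι : Type*} [Fintype ι]
    (φ : ι → ZMod L → ℂ) (hφ : ∀ f l, ∑ i, ipL L f (φ i) * φ i l = f l) (j : ZMod L) :
    ∑ i, ‖φ i j‖ ^ 2 = 1 := by
  have hj := hφ (Pi.single j 1) j
  simp only [ipL_single_one_left, Pi.single_eq_same] at hj
  apply Complex.ofReal_injective
  push_cast
  rw [← hj]
  refine Finset.sum_congr rfl fun i _ => ?_
  rw [← Complex.conj_mul', Complex.star_def]

theorem sum_sum_norm_sq_eq_of_reconstruction {ι : Type*} [Fintype ι]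
    (φ : ι → ZMod L → ℂ) (hφ : ∀ f l, ∑ i, ipL L f (φ i) * φ i l = f l) :
    ∑ i, ∑ l, ‖φ i l‖ ^ 2 = L := by
  rw [Finset.sum_comm]
  simp [sum_norm_sq_apply_eq_one_of_reconstruction φ hφ, ZMod.card]

end

theorem parseval_window_norm_general
    (L a M : ℕ) [NeZero L] (haL : a ∣ L)
    (h : ZMod L → ℂ)
    (hpars : ∀ f : ZMod L → ℂ, ∀ l : ZMod L,
      (∑ n : Fin (L / a), ∑ m : Fin M,
        ipL L f (gaborAtom L M h m ((n : ℕ) * a)) *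
          gaborAtom L M h m ((n : ℕ) * a) l) = f l) :
    ∑ l : ZMod L, ‖h l‖ ^ 2 = (a : ℝ) / (M : ℝ) := by
  set φ : Fin (L / a) × Fin M → ZMod L → ℂ := fun i => gaborAtom L M h i.2 (i.1 * a)
  have hφ : ∀ f l, ∑ i, ipL L f (φ i) * φ i l = f l := fun f l => by
    rw [Fintype.sum_prod_type, hpars]
  have htotal := sum_sum_norm_sq_eq_of_reconstruction φ hφ
  simp only [φ, sum_norm_sq_gaborAtom, Finset.sum_const, Finset.card_univ, Fintype.card_prod,
    Fintype.card_fin, nsmul_eq_mul, Nat.cast_mul] at htotal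
  have hL : ((L / a : ℕ) : ℝ) * a = L := by exact_mod_cast Nat.div_mul_cancel haL
  have hLa : ((L / a : ℕ) : ℝ) ≠ 0 := by
    rintro h0
    rw [h0, zero_mul] at hL
    exact NeZero.ne L (by exact_mod_cast hL.symm)
  have hM : (M : ℝ) ≠ 0 := by
    rintro h0
    rw [h0, mul_zero, zero_mul] at htotal
    exact NeZero.ne L (by exact_mod_cast htotal.symm)
  rw [eq_div_iff hM]
  apply mul_left_cancel₀ hLa
  linarith

/-- if `G(h,a,M)` is a Parseval frame on `ℂ^L`, i.e. its frame operator
is the identity, then `‖h‖₂² = a/M`. -/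
theorem parseval_window_norm
    (L a M : ℕ) [NeZero L] (ha : 0 < a) (hM : 0 < M) (haL : a ∣ L) (hML : M ∣ L)
    (h : ZMod L → ℂ)
    (hpars : ∀ f : ZMod L → ℂ, ∀ l : ZMod L,
      (∑ n : Fin (L / a), ∑ m : Fin M,
        ipL L f (gaborAtom L M h m ((n : ℕ) * a)) *
          gaborAtom L M h m ((n : ℕ) * a) l) = f l) :
    ∑ l : ZMod L, ‖h l‖ ^ 2 = (a : ℝ) / (M : ℝ) :=
  parseval_window_norm_general L a M haL h hpars
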